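/- arXiv:2005.13484 — 4 statements merged into one kernel-verified Lean document; each statement's English description precedes it below -/
import Mathlib

section
/- Let B be a commutative Noetherian ring, M a finitely generated B-module, and φ : M → M a B-linear automorphism. Then φ satisfies a monic polynomial f(X) ∈ B[X] whose constant term is a unit in B. -/
/-!
By Cayley–Hamilton every endomorphism of a finite module is integral, in particular `φ⁻¹`.
If `g` is a monic polynomial killing `φ⁻¹`, its reverse `Xᵈ g(1/X)` kills `φ` and has
constant coefficient `1`. Adding to it `p * X^(d+1)`, with `p` a monic polynomial killing `φ`,
makes it monic without touching its constant coefficient.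
-/

open Polynomial

namespace Polynomial

section Semiring

variable {R A : Type*} [CommSemiring R] [Semiring A] [Algebra R A]

theorem aeval_inv_reflect_mul_pow (u : Aˣ) {N : ℕ} {f : R[X]} (hf : f.natDegree ≤ N) :
    aeval (↑u⁻¹ : A) (f.reflect N) * ↑u ^ N = aeval (u : A) f := by
  refine induction_with_natDegree_le
    (fun f => aeval (↑u⁻¹ : A) (f.reflect N) * ↑u ^ N = aeval (u : A) f) N (by simp)
    (fun n r _ hn => ?_) (fun f g _ _ hf hg => ?_) f hf
  · obtain ⟨k, rfl⟩ := Nat.exists_eq_add_of_le' hn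
    rw [reflect_C_mul_X_pow, revAt_le hn, Nat.add_sub_cancel]
    simp only [map_mul, aeval_C, map_pow, aeval_X, mul_assoc, pow_add]
    rw [← Units.val_pow_eq_pow_val, ← Units.val_pow_eq_pow_val u k, inv_pow,
      Units.inv_mul_cancel_left]
  · simp only [reflect_add, map_add, add_mul, hf, hg]

theorem aeval_reverse_eq_zero_of_aeval_inv_eq_zero (u : Aˣ) {f : R[X]}
    (hf : aeval (↑u⁻¹ : A) f = 0) : aeval (u : A) f.reverse = 0 := by
  have h := aeval_inv_reflect_mul_pow u⁻¹ (le_refl f.natDegree)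
  rw [inv_inv, hf] at h
  exact (u⁻¹.isUnit.pow _).mul_left_eq_zero.mp h

end Semiring

variable {R A : Type*} [CommRing R] [Ring A] [Algebra R A]

theorem exists_coeff_zero_eq_one_aeval_eq_zero_of_isIntegral_inv (u : Aˣ)
    (hu : IsIntegral R (↑u⁻¹ : A)) : ∃ h : R[X], h.coeff 0 = 1 ∧ aeval (u : A) h = 0 := by
  obtain ⟨g, hg, hgu⟩ := hu
  rw [← aeval_def] at hgu
  exact ⟨g.reverse, by rw [coeff_zero_reverse, hg.leadingCoeff],
    aeval_reverse_eq_zero_of_aeval_inv_eq_zero u hgu⟩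

end Polynomial

theorem IsIntegral.exists_monic_isUnit_coeff_zero_aeval_eq_zero {R A : Type*} [CommRing R]
    [Ring A] [Algebra R A] {a : A} (ha : IsIntegral R a) {h : R[X]} (h0 : IsUnit (h.coeff 0))
    (hh : aeval a h = 0) : ∃ f : R[X], f.Monic ∧ IsUnit (f.coeff 0) ∧ aeval a f = 0 := by
  obtain ⟨p, hp, hpa⟩ := ha
  rw [← aeval_def] at hpa
  refine ⟨p * X ^ (h.natDegree + 1) + h, ?_, by simpa using h0, by simp [hpa, hh]⟩
  nontriviality R
  refine (hp.mul (monic_X_pow _)).add_of_left ?_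
  rw [degree_mul_X_pow, degree_eq_natDegree hp.ne_zero, ← Nat.cast_add]
  exact degree_le_natDegree.trans_lt (by exact_mod_cast (by omega))

theorem monic_poly_unit_constant_of_bijective_endo_general
    (B : Type*) [CommRing B]
    (M : Type*) [AddCommGroup M] [Module B M] [Module.Finite B M]
    (φ : M →ₗ[B] M) (hφ : Function.Bijective φ) :
    ∃ f : Polynomial B, f.Monic ∧ IsUnit (f.coeff 0) ∧
      Polynomial.aeval (φ : Module.End B M) f = 0 := by
  obtain ⟨u, hu⟩ := (Module.End.isUnit_iff φ).mpr hφ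
  obtain ⟨h, h0, hh⟩ := exists_coeff_zero_eq_one_aeval_eq_zero_of_isIntegral_inv u
    (Algebra.IsIntegral.isIntegral (R := B) _)
  rw [hu] at hh
  exact (Algebra.IsIntegral.isIntegral (R := B) _).exists_monic_isUnit_coeff_zero_aeval_eq_zero
    (h0 ▸ isUnit_one) hh

/-- Let `B` be a commutative Noetherian ring, `M` a finitely generated `B`-module, and
`φ : M → M` a `B`-linear automorphism. Then `φ` satisfies a monic polynomial
`f ∈ B[X]` whose constant term is a unit in `B`. -/
theorem monic_poly_unit_constant_of_bijective_endo
    (B : Type*) [CommRing B] [IsNoetherianRing B]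
    (M : Type*) [AddCommGroup M] [Module B M] [Module.Finite B M]
    (φ : M →ₗ[B] M) (hφ : Function.Bijective φ) :
    ∃ f : Polynomial B, f.Monic ∧ IsUnit (f.coeff 0) ∧
      Polynomial.aeval (φ : Module.End B M) f = 0 :=
  monic_poly_unit_constant_of_bijective_endo_general B M φ hφ
end

section
/- Let G = GL_n over a field F, let P_n be the mirabolic subgroup (matrices with last row (0,...,0,1)), N_n the upper triangular unipotent subgroup, Z_n the center, and w_n the antidiagonal permutation matrix. Set w_{n,n-m} = diag(I_n's appropriate block, w_{n-m}) ∈ GL_n. Then GL_n(F) = Z_n P_n ⊔ ⊔_{m=1}^{n-1} N_n w_n w_{n,n-m} Z_n P_n, i.e., these double cosets are pairwise disjoint and cover GL_n(F). (Chen's decomposition.) -/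
open Matrix

variable (F : Type*) [Field F] (n : ℕ) [NeZero n]

/-- The last index of `Fin n`. -/
def lastIdx : Fin n := ⟨n - 1, by have := Nat.pos_of_ne_zero (NeZero.ne n); omega⟩

/-- The mirabolic subgroup `P_n`: invertible matrices whose last row is `(0,…,0,1)`. -/
def mirabolicSet : Set (GL (Fin n) F) :=
  {g | ∀ j : Fin n,
    (g : Matrix (Fin n) (Fin n) F) (lastIdx n) j = if j = lastIdx n then 1 else 0}

/-- The subgroup `N_n` of upper triangular unipotent matrices. -/
def upperUnipSet : Set (GL (Fin n) F) :=
  {g | (∀ i j : Fin n, j < i → (g : Matrix (Fin n) (Fin n) F) i j = 0) ∧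
    ∀ i : Fin n, (g : Matrix (Fin n) (Fin n) F) i i = 1}

/-- The center `Z_n` of `GL_n(F)`: nonzero scalar matrices. -/
def centerSet : Set (GL (Fin n) F) :=
  {g | ∃ c : Fˣ, (g : Matrix (Fin n) (Fin n) F) = (c : F) • (1 : Matrix (Fin n) (Fin n) F)}

/-- The antidiagonal permutation matrix `w_n`. -/
def wAnti : Matrix (Fin n) (Fin n) F :=
  Matrix.of fun i j => if (i : ℕ) + (j : ℕ) = n - 1 then 1 else 0

/-- The block matrix `w_{m,n-m} = diag(I_m, w_{n-m})`. -/
def wBlockMat (m : ℕ) : Matrix (Fin n) (Fin n) F :=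
  Matrix.of fun i j =>
    if (i : ℕ) < m then (if i = j then 1 else 0)
    else if (i : ℕ) + (j : ℕ) = n + m - 1 then 1 else 0

/-- The cell `Z_n P_n`. -/
def cellZero : Set (GL (Fin n) F) :=
  {g | ∃ z ∈ centerSet F n, ∃ p ∈ mirabolicSet F n, g = z * p}

/-- The cell `N_n w_n w_{m,n-m} Z_n P_n`, described at the level of underlying matrices. -/
def cellMid (m : ℕ) : Set (GL (Fin n) F) :=
  {g | ∃ u ∈ upperUnipSet F n, ∃ z ∈ centerSet F n, ∃ p ∈ mirabolicSet F n,
    (g : Matrix (Fin n) (Fin n) F) =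
      (u : Matrix (Fin n) (Fin n) F) * wAnti F n * wBlockMat F n m *
        (z : Matrix (Fin n) (Fin n) F) * (p : Matrix (Fin n) (Fin n) F)}

/-!
The invariant of `g` is the last row `v` of `g⁻¹`, the unique row vector with `v g = e_n`.
Right multiplication by `P_n` leaves it unchanged, a scalar in `Z_n` rescales it, and left
multiplication by `u ∈ N_n` replaces it by `v u⁻¹`, which keeps the position of its first nonzero
entry. The matrix `w_n w_{m,n-m}` is a permutation matrix, and the last row of its inverse is
`e_{n-m}`; so `N_n w_n w_{m,n-m} Z_n P_n` consists exactly of those `g` whose `v` has its first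
nonzero entry at position `n - m`, and `Z_n P_n` of those with it at position `n`. Conversely, a
`v` with first nonzero entry `v_t` at position `t` equals `v_t e_t u⁻¹` for the `u ∈ N_n` whose row
`t` is `v / v_t`, so every `g` lies in the cell named by that position, and in no other.
-/

section LeadingIndex

variable {ι R : Type*} [LinearOrder ι] [Zero R]

def IsLeadingIndex (v : ι → R) (t : ι) : Prop :=
  (∀ j < t, v j = 0) ∧ v t ≠ 0

theorem IsLeadingIndex.unique {v : ι → R} {t t' : ι} (h : IsLeadingIndex v t)
    (h' : IsLeadingIndex v t') : t = t' := by
  rcases lt_trichotomy t t' with hlt | heq | hgt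
  · exact absurd (h'.1 t hlt) h.2
  · exact heq
  · exact absurd (h.1 t' hgt) h'.2

theorem exists_isLeadingIndex [WellFoundedLT ι] {v : ι → R} (hv : v ≠ 0) :
    ∃ t, IsLeadingIndex v t := by
  obtain ⟨t, ht, hmin⟩ := wellFounded_lt.has_min {j | v j ≠ 0} (Function.ne_iff.1 hv)
  exact ⟨t, fun j hj => by_contra fun hne => hmin j hne hj, ht⟩

end LeadingIndex

theorem Matrix.IsUpperTriangular.mul_apply_self {ι R : Type*} [LinearOrder ι] [Fintype ι]
    [NonUnitalNonAssocSemiring R] {M N : Matrix ι ι R} (hM : M.IsUpperTriangular)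
    (hN : N.IsUpperTriangular) (i : ι) : (M * N) i i = M i i * N i i := by
  rw [mul_apply, Finset.sum_eq_single i]
  · intro k _ hki
    rcases hki.lt_or_gt with hlt | hgt
    · rw [hM hlt, zero_mul]
    · rw [hN hgt, mul_zero]
  · simp

section Permutation

variable {ι R : Type*} [Fintype ι] [DecidableEq ι] [CommRing R]

def permMatrixUnit (σ : Equiv.Perm ι) : GL ι R :=
  ⟨σ.permMatrix R, σ⁻¹.permMatrix R,
    by rw [← permMatrix_mul, inv_mul_cancel, permMatrix_one],
    by rw [← permMatrix_mul, mul_inv_cancel, permMatrix_one]⟩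

@[simp]
theorem val_permMatrixUnit (σ : Equiv.Perm ι) :
    ((permMatrixUnit σ : GL ι R) : Matrix ι ι R) = σ.permMatrix R :=
  rfl

@[simp]
theorem val_inv_permMatrixUnit (σ : Equiv.Perm ι) :
    ((permMatrixUnit σ)⁻¹ : GL ι R) = σ⁻¹.permMatrix R :=
  rfl

end Permutation

section

variable {F n}

def wPerm (n m : ℕ) : Equiv.Perm (Fin n) where
  toFun i := ⟨if (i : ℕ) + m < n then i + m else n - 1 - i, by split_ifs <;> omega⟩
  invFun j := ⟨if m ≤ (j : ℕ) then j - m else n - 1 - j, by split_ifs <;> omega⟩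
  left_inv i := by ext; dsimp only; split_ifs <;> omega
  right_inv j := by ext; dsimp only; split_ifs <;> omega

theorem val_wPerm_symm_lastIdx (m : ℕ) : ((wPerm n m).symm (lastIdx n) : ℕ) = n - 1 - m := by
  simp only [wPerm, Equiv.coe_fn_symm_mk, lastIdx]
  split_ifs <;> omega

section

omit [NeZero n]

theorem wAnti_eq_permMatrix : wAnti F n = (Fin.revPerm : Equiv.Perm (Fin n)).permMatrix F := by
  ext i j
  have := i.isLt
  have := j.isLt
  simp only [wAnti, of_apply, PEquiv.toMatrix_apply, Equiv.toPEquiv_apply, Option.mem_def,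
    Option.some.injEq, Fin.revPerm_apply, Fin.ext_iff, Fin.val_rev]
  split_ifs <;> first | rfl | omega

theorem wAnti_mul_wBlockMat (m : ℕ) :
    wAnti F n * wBlockMat F n m = (wPerm n m).permMatrix F := by
  ext i j
  have := i.isLt
  have := j.isLt
  rw [wAnti_eq_permMatrix, PEquiv.toMatrix_toPEquiv_mul]
  simp only [wBlockMat, wPerm, submatrix_apply, of_apply, id, PEquiv.toMatrix_apply,
    Equiv.toPEquiv_apply, Option.mem_def, Option.some.injEq, Fin.revPerm_apply, Fin.ext_iff,
    Fin.val_rev, Equiv.coe_fn_mk]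
  split_ifs <;> first | rfl | omega

theorem inv_mem_upperUnipSet {u : GL (Fin n) F} (hu : u ∈ upperUnipSet F n) :
    u⁻¹ ∈ upperUnipSet F n := by
  have hU : IsUpperTriangular (u : Matrix (Fin n) (Fin n) F) := fun i j h => hu.1 i j h
  have hinv : IsUpperTriangular (u⁻¹ : GL (Fin n) F).val := by
    have := u.invertible
    rw [coe_units_inv]
    exact blockTriangular_inv_of_blockTriangular hU
  refine ⟨fun i j hij => hinv hij, fun i => ?_⟩
  have h : ((u⁻¹ * u : GL (Fin n) F) : Matrix (Fin n) (Fin n) F) i i = 1 := by simp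
  rwa [Units.val_mul, hinv.mul_apply_self hU, hu.2, mul_one] at h

theorem exists_mem_upperUnipSet_row_eq {t : Fin n} {x : Fin n → F} (hx : ∀ j < t, x j = 0)
    (ht : x t = 1) : ∃ u ∈ upperUnipSet F n, (u : Matrix (Fin n) (Fin n) F) t = x := by
  set M := (1 : Matrix (Fin n) (Fin n) F).updateRow t x
  have hM : M.IsUpperTriangular := fun i j hji => by
    by_cases hi : i = t
    · subst hi; simp [M, hx j hji]
    · simp only [M, updateRow_ne hi]
      exact one_apply_ne hji.ne'
  have hdiag : ∀ i, M i i = 1 := fun i => by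
    by_cases hi : i = t
    · subst hi; simp [M, ht]
    · simp [M, updateRow_ne hi]
  have hdet : M.det ≠ 0 := by simp [det_of_isUpperTriangular hM, hdiag]
  have hu := GeneralLinearGroup.val_mkOfDetNeZero M hdet
  refine ⟨GeneralLinearGroup.mkOfDetNeZero M hdet, ⟨fun i j hji => ?_, fun i => ?_⟩, ?_⟩ <;>
    rw [hu]
  exacts [hM hji, hdiag i, updateRow_self]

theorem isLeadingIndex_row_of_mem_upperUnipSet {u : GL (Fin n) F} (hu : u ∈ upperUnipSet F n)
    (c : Fˣ) (t : Fin n) : IsLeadingIndex ((c : F) • (u : Matrix (Fin n) (Fin n) F) t) t :=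
  ⟨fun j hj => by simp [hu.1 t j hj], by simp [hu.2]⟩

theorem isLeadingIndex_iff_exists_upperUnipSet (v : Fin n → F) (t : Fin n) :
    IsLeadingIndex v t ↔
      ∃ u ∈ upperUnipSet F n, ∃ c : Fˣ, v = (c : F) • ((u⁻¹ : GL (Fin n) F) : Matrix _ _ F) t := by
  constructor
  · rintro ⟨hzero, ht⟩
    obtain ⟨u, hu, hrow⟩ := exists_mem_upperUnipSet_row_eq (x := (v t)⁻¹ • v)
      (fun j hj => by simp [hzero j hj]) (inv_mul_cancel₀ ht)
    refine ⟨u⁻¹, inv_mem_upperUnipSet hu, Units.mk0 _ ht, ?_⟩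
    rw [inv_inv, hrow, Units.val_mk0, smul_inv_smul₀ ht]
  · rintro ⟨u, hu, c, rfl⟩
    exact isLeadingIndex_row_of_mem_upperUnipSet (inv_mem_upperUnipSet hu) c t

end

theorem isLeadingIndex_lastIdx_iff (v : Fin n → F) :
    IsLeadingIndex v (lastIdx n) ↔ ∃ c : Fˣ, v = (c : F) • Pi.single (lastIdx n) 1 := by
  constructor
  · rintro ⟨hzero, hlast⟩
    refine ⟨Units.mk0 _ hlast, funext fun j => ?_⟩
    by_cases hj : j = lastIdx n
    · simp [hj]
    · have hlt : j < lastIdx n := (Fin.le_def.2 (Nat.le_sub_one_of_lt j.isLt)).lt_of_ne hj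
      simp [hzero j hlt, hj]
  · rintro ⟨c, rfl⟩
    exact ⟨fun j hj => by simp [hj.ne], by simp⟩

def lastRowInv (g : GL (Fin n) F) : Fin n → F :=
  ((g⁻¹ : GL (Fin n) F) : Matrix (Fin n) (Fin n) F) (lastIdx n)

theorem eq_lastRowInv_iff (g : GL (Fin n) F) (v : Fin n → F) :
    v = lastRowInv g ↔ v ᵥ* (g : Matrix (Fin n) (Fin n) F) = Pi.single (lastIdx n) 1 := by
  constructor
  · rintro rfl
    rw [lastRowInv, ← mul_apply_eq_vecMul, ← Units.val_mul, inv_mul_cancel, Units.val_one]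
    ext j
    simp [one_apply, Pi.single_apply, eq_comm]
  · intro h
    calc v = v ᵥ* ((g * g⁻¹ : GL (Fin n) F) : Matrix (Fin n) (Fin n) F) := by simp
      _ = Pi.single (lastIdx n) 1 ᵥ* ((g⁻¹ : GL (Fin n) F) : Matrix (Fin n) (Fin n) F) := by
        rw [Units.val_mul, ← vecMul_vecMul, h]
      _ = lastRowInv g := single_one_vecMul _ _

theorem lastRowInv_vecMul (g : GL (Fin n) F) :
    lastRowInv g ᵥ* (g : Matrix (Fin n) (Fin n) F) = Pi.single (lastIdx n) 1 :=
  (eq_lastRowInv_iff g _).1 rfl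

theorem lastRowInv_one : lastRowInv (1 : GL (Fin n) F) = Pi.single (lastIdx n) 1 :=
  ((eq_lastRowInv_iff 1 _).2 (by simp)).symm

theorem lastRowInv_ne_zero (g : GL (Fin n) F) : lastRowInv g ≠ 0 := fun h => by
  simpa [h] using congrFun (lastRowInv_vecMul g) (lastIdx n)

theorem lastRowInv_mul (g h : GL (Fin n) F) :
    lastRowInv (g * h) = lastRowInv h ᵥ* ((g⁻¹ : GL (Fin n) F) : Matrix (Fin n) (Fin n) F) := by
  rw [lastRowInv, _root_.mul_inv_rev, Units.val_mul, mul_apply_eq_vecMul]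
  rfl

theorem lastRowInv_mul_of_val_eq_smul_one (h : GL (Fin n) F) {z : GL (Fin n) F} {c : Fˣ}
    (hz : (z : Matrix (Fin n) (Fin n) F) = (c : F) • 1) :
    lastRowInv (h * z) = ((c⁻¹ : Fˣ) : F) • lastRowInv h := by
  symm
  rw [eq_lastRowInv_iff, Units.val_mul, hz, Matrix.mul_smul, mul_one, smul_vecMul, vecMul_smul,
    lastRowInv_vecMul, smul_smul, ← Units.val_mul, inv_mul_cancel, Units.val_one, one_smul]

theorem mem_mirabolicSet_iff (p : GL (Fin n) F) :
    p ∈ mirabolicSet F n ↔ lastRowInv p = Pi.single (lastIdx n) 1 := by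
  rw [eq_comm, eq_lastRowInv_iff, single_one_vecMul, row_def, funext_iff]
  simp only [Pi.single_apply]
  rfl

theorem exists_mirabolicSet_eq_mul_iff (g h : GL (Fin n) F) :
    (∃ p ∈ mirabolicSet F n, g = h * p) ↔ lastRowInv g = lastRowInv h := by
  constructor
  · rintro ⟨p, hp, rfl⟩
    rw [lastRowInv_mul, (mem_mirabolicSet_iff p).1 hp, single_one_vecMul]
    rfl
  · intro hgh
    refine ⟨h⁻¹ * g, ?_, (mul_inv_cancel_left h g).symm⟩
    rw [mem_mirabolicSet_iff, lastRowInv_mul, inv_inv, hgh, lastRowInv_vecMul]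

theorem exists_centerSet_mirabolicSet_eq_mul_iff (g h : GL (Fin n) F) :
    (∃ z ∈ centerSet F n, ∃ p ∈ mirabolicSet F n, g = h * z * p) ↔
      ∃ c : Fˣ, lastRowInv g = (c : F) • lastRowInv h := by
  simp only [exists_mirabolicSet_eq_mul_iff]
  constructor
  · rintro ⟨z, ⟨c, hz⟩, hg⟩
    exact ⟨c⁻¹, hg.trans (lastRowInv_mul_of_val_eq_smul_one h hz)⟩
  · rintro ⟨c, hg⟩
    let z : GL (Fin n) F := Units.map (algebraMap F (Matrix (Fin n) (Fin n) F)).toMonoidHom c⁻¹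
    have hz : (z : Matrix (Fin n) (Fin n) F) = ((c⁻¹ : Fˣ) : F) • 1 :=
      Algebra.algebraMap_eq_smul_one _
    refine ⟨z, ⟨c⁻¹, hz⟩, ?_⟩
    rw [hg, lastRowInv_mul_of_val_eq_smul_one h hz, inv_inv]

theorem mem_cellZero_iff (g : GL (Fin n) F) :
    g ∈ cellZero F n ↔ IsLeadingIndex (lastRowInv g) (lastIdx n) := by
  have h := exists_centerSet_mirabolicSet_eq_mul_iff g 1
  simp only [one_mul, lastRowInv_one] at h
  rw [isLeadingIndex_lastIdx_iff, ← h]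
  rfl

theorem mem_cellMid_iff (g : GL (Fin n) F) (m : ℕ) :
    g ∈ cellMid F n m ↔ IsLeadingIndex (lastRowInv g) ((wPerm n m).symm (lastIdx n)) := by
  have hval : ∀ u z p : GL (Fin n) F,
      (u * wAnti F n * wBlockMat F n m * z * p : Matrix (Fin n) (Fin n) F) =
        ((u * permMatrixUnit (wPerm n m) * z * p : GL (Fin n) F) : Matrix (Fin n) (Fin n) F) := by
    intro u z p
    rw [mul_assoc (u : Matrix (Fin n) (Fin n) F), wAnti_mul_wBlockMat]
    simp
  have hrow : ∀ u : GL (Fin n) F, lastRowInv (u * permMatrixUnit (wPerm n m)) =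
      ((u⁻¹ : GL (Fin n) F) : Matrix (Fin n) (Fin n) F) ((wPerm n m).symm (lastIdx n)) := by
    intro u
    have hσ : (wPerm n m)⁻¹.permMatrix F (lastIdx n) = Pi.single ((wPerm n m).symm (lastIdx n)) 1 :=
      PEquiv.toMatrix_toPEquiv_apply _ _
    rw [lastRowInv_mul, lastRowInv, val_inv_permMatrixUnit, hσ, single_one_vecMul]
    rfl
  simp only [cellMid, hval, ← Units.ext_iff, exists_centerSet_mirabolicSet_eq_mul_iff, hrow]
  exact (isLeadingIndex_iff_exists_upperUnipSet _ _).symm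

end

/-- Chen's double coset decomposition:
`GL_n(F) = Z_n P_n ⊔ ⊔_{m=1}^{n-1} N_n w_n w_{m,n-m} Z_n P_n`,
i.e. these cells cover `GL_n(F)` and are pairwise disjoint. -/
theorem chen_decomposition :
    (Set.univ : Set (GL (Fin n) F)) =
      cellZero F n ∪ (⋃ m ∈ Finset.Icc 1 (n - 1), cellMid F n m) ∧
    (∀ m ∈ Finset.Icc 1 (n - 1), Disjoint (cellZero F n) (cellMid F n m)) ∧
    (∀ m ∈ Finset.Icc 1 (n - 1), ∀ m' ∈ Finset.Icc 1 (n - 1), m ≠ m' →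
      Disjoint (cellMid F n m) (cellMid F n m')) := by
  have hlast : (lastIdx n : ℕ) = n - 1 := rfl
  refine ⟨?_, fun m hm => ?_, fun m hm m' hm' hne => ?_⟩
  · refine (Set.eq_univ_of_forall fun g => ?_).symm
    obtain ⟨t, ht⟩ := exists_isLeadingIndex (lastRowInv_ne_zero g)
    by_cases htl : t = lastIdx n
    · exact Or.inl ((mem_cellZero_iff g).2 (htl ▸ ht))
    have ht' : (t : ℕ) < n - 1 := by have := Fin.val_ne_of_ne htl; omega
    refine Or.inr (Set.mem_iUnion₂.2 ⟨n - 1 - t, by simp; omega, (mem_cellMid_iff g _).2 ?_⟩)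
    convert ht using 1
    exact Fin.ext (by rw [val_wPerm_symm_lastIdx]; omega)
  · refine Set.disjoint_left.2 fun g hg hg' => ?_
    have := congrArg Fin.val (((mem_cellZero_iff g).1 hg).unique ((mem_cellMid_iff g m).1 hg'))
    simp only [Finset.mem_Icc, hlast, val_wPerm_symm_lastIdx] at this hm
    omega
  · refine Set.disjoint_left.2 fun g hg hg' => hne ?_
    have := congrArg Fin.val (((mem_cellMid_iff g m).1 hg).unique ((mem_cellMid_iff g m').1 hg'))
    simp only [Finset.mem_Icc, val_wPerm_symm_lastIdx] at this hm hm'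
    omega
end

section
/- Let G be a group, H a subgroup, A a commutative ring, and V an A[H]-module. For any commutative A-algebra R, there is a natural R[G]-module isomorphism ind_H^G(V ⊗_A R) ≅ (ind_H^G V) ⊗_A R, where ind_H^G denotes functions f : G → V with f(hg) = h·f(g) supported on finitely many right H-cosets, with G acting by right translation. -/
open scoped TensorProduct Classical

section Ind

variable (A : Type*) [CommRing A] (G : Type*) [Group G] (H : Subgroup G)
variable (V : Type*) [AddCommGroup V] [Module A V]

/-- Compact induction `ind_H^G V`: functions `f : G → V` with `f(hg) = h · f(g)`
which are supported on finitely many right cosets `Hg`, as an `A`-submodule of `G → V`.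
Here the `A`-linear action of `H` on `V` is recorded by `ρ : H →* (V →ₗ[A] V)`. -/
def IndCarrier (ρ : H →* (V →ₗ[A] V)) : Submodule A (G → V) where
  carrier := {f | (∀ (h : H) (g : G), f ((h : G) * g) = ρ h (f g)) ∧
    ∃ s : Finset G, ∀ g : G, f g ≠ 0 → ∃ (h : H) (g₀ : G), g₀ ∈ s ∧ g = (h : G) * g₀}
  zero_mem' := by
    refine ⟨fun h g => by simp, ⟨∅, fun g hg => absurd rfl hg⟩⟩
  add_mem' := by
    rintro a b ⟨ha1, sa, ha2⟩ ⟨hb1, sb, hb2⟩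
    refine ⟨fun h g => by simp [ha1, hb1], ⟨sa ∪ sb, fun g hg => ?_⟩⟩
    by_cases hag : a g ≠ 0
    · obtain ⟨h, g₀, hg₀, rfl⟩ := ha2 g hag
      exact ⟨h, g₀, Finset.mem_union_left _ hg₀, rfl⟩
    · have hbg : b g ≠ 0 := by
        intro hb0
        exact hg (by simp [Pi.add_apply, hb0, not_not.mp hag])
      obtain ⟨h, g₀, hg₀, rfl⟩ := hb2 g hbg
      exact ⟨h, g₀, Finset.mem_union_right _ hg₀, rfl⟩
  smul_mem' := by
    rintro c f ⟨hf1, s, hf2⟩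
    refine ⟨fun h g => by simp [hf1], ⟨s, fun g hg => ?_⟩⟩
    have : f g ≠ 0 := by
      intro h0
      exact hg (by simp [Pi.smul_apply, h0])
    exact hf2 g this

/-- Right translation by `g₀ ∈ G` on compact induction, the `G`-action on `ind_H^G V`. -/
def indTranslate (ρ : H →* (V →ₗ[A] V)) (g₀ : G) :
    ↥(IndCarrier A G H V ρ) →ₗ[A] ↥(IndCarrier A G H V ρ) where
  toFun f := ⟨fun x => (f : G → V) (x * g₀), by
    obtain ⟨h1, s, h2⟩ := f.2
    refine ⟨fun h g => by simpa [mul_assoc] using h1 h (g * g₀), ⟨s.image (· * g₀⁻¹), ?_⟩⟩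
    intro g hg
    obtain ⟨h, g₁, hg₁, hgg⟩ := h2 (g * g₀) hg
    refine ⟨h, g₁ * g₀⁻¹, Finset.mem_image_of_mem _ hg₁, ?_⟩
    rw [← mul_assoc, ← hgg, mul_assoc, mul_inv_cancel, mul_one]⟩
  map_add' f f' := Subtype.ext (funext fun x => rfl)
  map_smul' c f := Subtype.ext (funext fun x => rfl)

end Ind

/-! Choosing a representative of each right coset `Hg` identifies `ind_H^G V` with the
finitely supported functions `H\G →₀ V`: a function in the induced module is
determined by its values on the representatives, and `H`-equivariance extends any finitely
supported choice of values. Base change commutes with `H\G →₀ -`, which gives the isomorphism;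
on pure tensors it is `r ⊗ f ↦ (g ↦ r ⊗ f g)`, and in that form it visibly commutes with right
translation. -/

open TensorProduct QuotientGroup

section RightCosets

variable {G : Type*} [Group G] {H : Subgroup G}

theorem QuotientGroup.rightRel_mk_mul (h : H) (g : G) :
    (⟦(h : G) * g⟧ : Quotient (rightRel H)) = ⟦g⟧ :=
  Quotient.sound <| rightRel_apply.mpr <| by simp

variable (H) in
noncomputable def rightCosetFactor (g : G) : H :=
  ⟨g * (⟦g⟧ : Quotient (rightRel H)).out⁻¹, rightRel_apply.mp (Quotient.mk_out g)⟩

theorem rightCosetFactor_mul_out (g : G) :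
    (rightCosetFactor H g : G) * (⟦g⟧ : Quotient (rightRel H)).out = g :=
  inv_mul_cancel_right _ _

theorem rightCosetFactor_mul (h : H) (g : G) :
    rightCosetFactor H ((h : G) * g) = h * rightCosetFactor H g :=
  Subtype.ext <| by simp [rightCosetFactor, rightRel_mk_mul, mul_assoc]

theorem rightCosetFactor_out (q : Quotient (rightRel H)) : rightCosetFactor H q.out = 1 :=
  Subtype.ext <| by simp [rightCosetFactor]

end RightCosets

namespace IndCarrier

variable {A : Type*} [CommRing A] {G : Type*} [Group G] {H : Subgroup G}
  {V : Type*} [AddCommGroup V] [Module A V] (ρ : H →* (V →ₗ[A] V))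

theorem apply_mul (f : IndCarrier A G H V ρ) (h : H) (g : G) :
    (f : G → V) ((h : G) * g) = ρ h ((f : G → V) g) :=
  f.2.1 h g

noncomputable def toFinsupp : IndCarrier A G H V ρ →ₗ[A] (Quotient (rightRel H) →₀ V) where
  toFun f := Finsupp.onFinset (f.2.2.choose.image fun g => ⟦g⟧) (fun q => (f : G → V) q.out)
    fun q hq => by
      obtain ⟨h, g₀, hg₀, hq⟩ := f.2.2.choose_spec q.out hq
      refine Finset.mem_image.mpr ⟨g₀, hg₀, ?_⟩
      rw [← rightRel_mk_mul h g₀, ← hq, Quotient.out_eq]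
  map_add' f f' := Finsupp.ext fun q => by simp
  map_smul' c f := Finsupp.ext fun q => by simp

noncomputable def ofFinsupp : (Quotient (rightRel H) →₀ V) →ₗ[A] IndCarrier A G H V ρ where
  toFun φ := ⟨fun g => ρ (rightCosetFactor H g) (φ ⟦g⟧), by
    refine ⟨fun h g => by simp [rightRel_mk_mul, rightCosetFactor_mul],
      φ.support.image Quotient.out, fun g hg => ?_⟩
    have hφ : φ ⟦g⟧ ≠ 0 := fun h0 => hg (by simp [h0])
    exact ⟨rightCosetFactor H g, _, Finset.mem_image_of_mem _ (Finsupp.mem_support_iff.mpr hφ),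
      (rightCosetFactor_mul_out g).symm⟩⟩
  map_add' φ ψ := Subtype.ext <| funext fun g => by simp
  map_smul' c φ := Subtype.ext <| funext fun g => by simp

noncomputable def equivFinsupp : IndCarrier A G H V ρ ≃ₗ[A] (Quotient (rightRel H) →₀ V) :=
  LinearEquiv.ofLinearMap (toFinsupp ρ) (ofFinsupp ρ)
    (LinearMap.ext fun φ => Finsupp.ext fun q => by
      simp [toFinsupp, ofFinsupp, rightCosetFactor_out])
    (LinearMap.ext fun f => Subtype.ext <| funext fun g => by
      simp [toFinsupp, ofFinsupp, ← apply_mul, rightCosetFactor_mul_out])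

variable (R : Type*) [CommRing R] [Algebra A R] (ρR : H →* ((R ⊗[A] V) →ₗ[R] (R ⊗[A] V)))

noncomputable def baseChangeEquiv :
    IndCarrier R G H (R ⊗[A] V) ρR ≃ₗ[R] R ⊗[A] IndCarrier A G H V ρ :=
  equivFinsupp ρR ≪≫ₗ (finsuppRight A R R V _).symm ≪≫ₗ
    (equivFinsupp ρ).symm.baseChange A R _ _

variable {ρ R ρR}

theorem tmul_mem (hρR : ∀ (h : H) (r : R) (v : V), ρR h (r ⊗ₜ[A] v) = r ⊗ₜ[A] (ρ h v))
    (r : R) (f : IndCarrier A G H V ρ) :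
    (fun g => r ⊗ₜ[A] (f : G → V) g) ∈ IndCarrier R G H (R ⊗[A] V) ρR := by
  obtain ⟨s, hs⟩ := f.2.2
  exact ⟨fun h g => by simp [apply_mul, hρR],
    s, fun g hg => hs g fun h0 => hg (by simp [h0])⟩

theorem baseChangeEquiv_symm_tmul
    (hρR : ∀ (h : H) (r : R) (v : V), ρR h (r ⊗ₜ[A] v) = r ⊗ₜ[A] (ρ h v))
    (r : R) (f : IndCarrier A G H V ρ) :
    (baseChangeEquiv ρ R ρR).symm (r ⊗ₜ[A] f) = ⟨_, tmul_mem hρR r f⟩ := by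
  have h : equivFinsupp ρR ⟨_, tmul_mem hρR r f⟩ =
      finsuppRight A R R V _ (r ⊗ₜ equivFinsupp ρ f) :=
    Finsupp.ext fun q => by simp [equivFinsupp, toFinsupp]
  simp [LinearEquiv.symm_apply_eq, baseChangeEquiv, h]

theorem baseChangeEquiv_indTranslate
    (hρR : ∀ (h : H) (r : R) (v : V), ρR h (r ⊗ₜ[A] v) = r ⊗ₜ[A] (ρ h v))
    (g₀ : G) (f : IndCarrier R G H (R ⊗[A] V) ρR) :
    baseChangeEquiv ρ R ρR (indTranslate R G H (R ⊗[A] V) ρR g₀ f) =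
      (indTranslate A G H V ρ g₀).baseChange R (baseChangeEquiv ρ R ρR f) := by
  obtain ⟨x, rfl⟩ := (baseChangeEquiv ρ R ρR).symm.surjective f
  rw [LinearEquiv.apply_symm_apply, ← LinearEquiv.eq_symm_apply]
  induction x using TensorProduct.induction_on with
  | zero => simp
  | tmul r f => ext g; simp [baseChangeEquiv_symm_tmul hρR, indTranslate]
  | add x y hx hy => simp [hx, hy]

end IndCarrier

/-- For `G` a group, `H ≤ G`, `A` a commutative ring, `V` an `A[H]`-module and `R` a
commutative `A`-algebra, there is a natural `R[G]`-module isomorphism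
`ind_H^G (V ⊗_A R) ≅ (ind_H^G V) ⊗_A R` (base change written here as `R ⊗[A] -`):
an `R`-linear isomorphism sending the function `g ↦ f(g) ⊗ r` to `f ⊗ r` and
commuting with the right translation action of `G` on both sides. -/
theorem indCarrier_baseChange
    (A : Type*) [CommRing A] (G : Type*) [Group G] (H : Subgroup G)
    (V : Type*) [AddCommGroup V] [Module A V] (ρ : H →* (V →ₗ[A] V))
    (R : Type*) [CommRing R] [Algebra A R]
    (ρR : H →* ((R ⊗[A] V) →ₗ[R] (R ⊗[A] V)))
    (hρR : ∀ (h : H) (r : R) (v : V), ρR h (r ⊗ₜ[A] v) = r ⊗ₜ[A] (ρ h v)) :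
    ∃ e : ↥(IndCarrier R G H (R ⊗[A] V) ρR) ≃ₗ[R] R ⊗[A] ↥(IndCarrier A G H V ρ),
      (∀ (r : R) (f : ↥(IndCarrier A G H V ρ)) (g : G),
        ((e.symm (r ⊗ₜ[A] f) : ↥(IndCarrier R G H (R ⊗[A] V) ρR)) : G → R ⊗[A] V) g =
          r ⊗ₜ[A] ((f : G → V) g)) ∧
      (∀ (g₀ : G) (f : ↥(IndCarrier R G H (R ⊗[A] V) ρR)),
        e (indTranslate R G H (R ⊗[A] V) ρR g₀ f) =
          (LinearMap.baseChange R (indTranslate A G H V ρ g₀)) (e f)) :=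
  ⟨IndCarrier.baseChangeEquiv ρ R ρR,
    fun r f g => by rw [IndCarrier.baseChangeEquiv_symm_tmul hρR],
    IndCarrier.baseChangeEquiv_indTranslate hρR⟩
end

section
/- Let A be a commutative ring, F a nonarchimedean local field, ψ : F → A^× an additive character such that ψ(x) - 1 is a unit in A whenever val(x) is sufficiently negative. Let W : GL_{n}(F) → A be a smooth function satisfying W(ug) = ψ(Σ u_{i,i+1}) W(g) for all upper unipotent u, where smooth means right-invariant under some compact open subgroup. Then for each l ∈ ℤ, the restriction of W to the set of diagonal matrices diag(a_1,...,a_{n-1},1) with Σ val(a_i) = l is supported on a set where the differences val(a_i) - val(a_{i+1}) are bounded above by a constant depending only on W. -/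
/-!
Write `d = diag(a_1, …, a_{n-1}, 1)`. Conjugation by `d` rescales the elementary unipotent
matrix: `d (1 + x E_{i,i+1}) = (1 + y E_{i,i+1}) d` with `y = a_i x / a_{i+1}`. So if `W` is
invariant under `1 + x E_{i,i+1}`, the equivariance gives `W d = ψ y * W d`, and `W d = 0` as
soon as `ψ y - 1` is a unit, i.e. once `val y = val a_i - val a_{i+1} + val x` is small enough.
Fixing one nonzero `x` with `e ≤ val x` thus bounds `val a_i - val a_{i+1}` from below on the
support; if there is no such `x`, then `val < e` on `Fˣ`, and `val (a_{i+1} / a_i) < e` is the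
bound.
-/

open Matrix

namespace Matrix

variable {ι R : Type*} [DecidableEq ι]

def IsUpperUnitriangular [LT ι] [Zero R] [One R] (u : Matrix ι ι R) : Prop :=
  (∀ i j : ι, j < i → u i j = 0) ∧ ∀ i : ι, u i i = 1

theorem isUpperUnitriangular_one_add_single [Preorder ι] [Ring R] {p q : ι} (hpq : p < q)
    (t : R) : IsUpperUnitriangular (1 + single p q t) := by
  refine ⟨fun i j hji => ?_, fun i => ?_⟩
  · have hpq' : ¬(p = i ∧ q = j) := by
      rintro ⟨rfl, rfl⟩
      exact lt_asymm hpq hji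
    simp [one_apply_ne hji.ne', single_apply_of_ne _ _ _ _ _ hpq']
  · have hpq' : ¬(p = i ∧ q = i) := fun ⟨hp, hq⟩ => hpq.ne (hp.trans hq.symm)
    simp [single_apply_of_ne _ _ _ _ _ hpq']

theorem diagonal_mul_one_add_single [Fintype ι] [Semiring R] (f : ι → R) (p q : ι) {x y : R}
    (hxy : f p * x = y * f q) :
    diagonal f * (1 + single p q x) = (1 + single p q y) * diagonal f := by
  rw [Matrix.mul_add, Matrix.add_mul, Matrix.mul_one, Matrix.one_mul]
  congr 1
  ext a b
  by_cases h : p = a ∧ q = b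
  · obtain ⟨rfl, rfl⟩ := h
    simp [hxy]
  · simp [single_apply_of_ne _ _ _ _ _ h]

theorem sum_superdiagonal_one_add_single [Ring R] {n : ℕ} (i : Fin n) (t : R) :
    ∑ j : Fin n, (1 + single i.castSucc i.succ t) j.castSucc j.succ = t := by
  simp [one_apply_ne Fin.castSucc_lt_succ.ne, single_apply, Fin.castSucc_inj]

end Matrix

theorem eq_zero_of_mul_eq_self_of_isUnit_sub_one {A : Type*} [Ring A] {a w : A}
    (hunit : IsUnit (a - 1)) (h : a * w = w) : w = 0 :=
  hunit.mul_right_eq_zero.1 (by rw [sub_mul, h, one_mul, sub_self])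

section Valuation

variable {F : Type*} [Field F] {val : F → ℤ}

theorem val_inv_of_map_mul (hval : ∀ x y : F, x ≠ 0 → y ≠ 0 → val (x * y) = val x + val y)
    {x : F} (hx : x ≠ 0) : val x⁻¹ = -val x := by
  have h1 := hval 1 1 one_ne_zero one_ne_zero
  have hinv := hval x x⁻¹ hx (inv_ne_zero hx)
  rw [one_mul] at h1
  rw [mul_inv_cancel₀ hx] at hinv
  omega

theorem val_mul_inv_of_map_mul (hval : ∀ x y : F, x ≠ 0 → y ≠ 0 → val (x * y) = val x + val y)
    {x y : F} (hx : x ≠ 0) (hy : y ≠ 0) : val (x * y⁻¹) = val x - val y := by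
  rw [hval x y⁻¹ hx (inv_ne_zero hy), val_inv_of_map_mul hval hy, sub_eq_add_neg]

end Valuation

theorem whittaker_diagonal_eq_zero {A R : Type*} [Ring A] [Ring R] {n : ℕ} {ψ : R → A}
    {W : Matrix (Fin (n + 1)) (Fin (n + 1)) R → A}
    (hW : ∀ u g : Matrix (Fin (n + 1)) (Fin (n + 1)) R, u.IsUpperUnitriangular →
      W (u * g) = ψ (∑ i : Fin n, u i.castSucc i.succ) * W g)
    {f : Fin (n + 1) → R} {i : Fin n} {x y : R} (hxy : f i.castSucc * x = y * f i.succ)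
    (hinv : W (diagonal f * (1 + single i.castSucc i.succ x)) = W (diagonal f))
    (hunit : IsUnit (ψ y - 1)) : W (diagonal f) = 0 := by
  refine eq_zero_of_mul_eq_self_of_isUnit_sub_one hunit ?_
  calc ψ y * W (diagonal f)
      = W ((1 + single i.castSucc i.succ y) * diagonal f) := by
        rw [hW _ _ (isUpperUnitriangular_one_add_single Fin.castSucc_lt_succ y),
          sum_superdiagonal_one_add_single]
    _ = W (diagonal f) := by rw [← diagonal_mul_one_add_single f _ _ hxy, hinv]

theorem whittaker_support_bounded_general
    (A : Type*) [CommRing A] (F : Type*) [Field F] (n : ℕ)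
    (val : F → ℤ)
    (hval : ∀ x y : F, x ≠ 0 → y ≠ 0 → val (x * y) = val x + val y)
    (ψ : F → A)
    (hψu : ∃ c₀ : ℤ, ∀ x : F, x ≠ 0 → val x < c₀ → IsUnit (ψ x - 1))
    (W : Matrix (Fin (n + 1)) (Fin (n + 1)) F → A)
    (hW : ∀ u g : Matrix (Fin (n + 1)) (Fin (n + 1)) F,
      ((∀ i j : Fin (n + 1), j < i → u i j = 0) ∧ ∀ i : Fin (n + 1), u i i = 1) →
      W (u * g) = ψ (∑ i : Fin n, u i.castSucc i.succ) * W g)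
    (hWsmooth : ∃ e : ℤ, ∀ (g : Matrix (Fin (n + 1)) (Fin (n + 1)) F) (i : Fin n)
      (x : F), x ≠ 0 → e ≤ val x →
      W (g * (1 + x • Matrix.single i.castSucc i.succ (1 : F))) = W g) :
    ∃ r : ℤ, ∀ a : Fin n → Fˣ,
      W (Matrix.diagonal fun j : Fin (n + 1) =>
          if h : (j : ℕ) < n then ((a ⟨j, h⟩ : Fˣ) : F) else 1) ≠ 0 →
      ∀ (i : Fin n) (h : (i : ℕ) + 1 < n),
        r ≤ val (a i : F) - val ((a ⟨(i : ℕ) + 1, h⟩ : Fˣ) : F) := by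
  obtain ⟨c₀, hψunit⟩ := hψu
  obtain ⟨e, hWsmooth⟩ := hWsmooth
  by_cases hlarge : ∃ x : F, x ≠ 0 ∧ e ≤ val x
  · obtain ⟨x, hx0, hxe⟩ := hlarge
    refine ⟨c₀ - val x, fun a hWa i h => ?_⟩
    by_contra! hlt
    set b : F := ((a ⟨(i : ℕ) + 1, h⟩ : Fˣ) : F)
    have hy0 : (a i : F) * x * b⁻¹ ≠ 0 := by simp [b, hx0]
    have hyval : val ((a i : F) * x * b⁻¹) < c₀ := by
      rw [val_mul_inv_of_map_mul hval (by simp [hx0]) (by simp [b]), hval _ _ (by simp) hx0]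
      omega
    refine hWa <| whittaker_diagonal_eq_zero hW (i := i) (x := x) ?_ ?_ <|
      hψunit _ hy0 hyval
    · simp [Fin.val_succ, h, b]
    · simpa using hWsmooth _ i x hx0 hxe
  · push Not at hlarge
    refine ⟨-e, fun a _ i h => ?_⟩
    have hratio := hlarge ((a ⟨(i : ℕ) + 1, h⟩ : F) * (a i : F)⁻¹) (by simp)
    rw [val_mul_inv_of_map_mul hval (by simp) (by simp)] at hratio
    omega

/-- Support of Whittaker functions on a valuation slice: let `A` be a commutative ring,
`F` a (nonarchimedean local) field with multiplicative valuation `val`, and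
`ψ : F → A` an additive character such that `ψ(x) - 1` is a unit whenever `val x` is
sufficiently negative.  Let `W : GL_{n+1}(F) → A` (here defined on matrices) be a smooth
function satisfying `W(ug) = ψ(∑ u_{i,i+1}) W(g)` for all upper unipotent `u`, where
smooth means right-invariance under the elementary unipotent matrices
`1 + x E_{i,i+1}` for `val x` large.  Then there is `r ∈ ℤ` such that
`W(diag(a_1,…,a_n,1)) = 0` unless `val(a_i) - val(a_{i+1}) ≥ r` for all `i`. -/
theorem whittaker_support_bounded
    (A : Type*) [CommRing A] (F : Type*) [Field F] (n : ℕ)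
    (val : F → ℤ)
    (hval : ∀ x y : F, x ≠ 0 → y ≠ 0 → val (x * y) = val x + val y)
    (ψ : F → A)
    (hψadd : ∀ x y : F, ψ (x + y) = ψ x * ψ y)
    (hψu : ∃ c₀ : ℤ, ∀ x : F, x ≠ 0 → val x < c₀ → IsUnit (ψ x - 1))
    (W : Matrix (Fin (n + 1)) (Fin (n + 1)) F → A)
    (hW : ∀ u g : Matrix (Fin (n + 1)) (Fin (n + 1)) F,
      ((∀ i j : Fin (n + 1), j < i → u i j = 0) ∧ ∀ i : Fin (n + 1), u i i = 1) →
      W (u * g) = ψ (∑ i : Fin n, u i.castSucc i.succ) * W g)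
    (hWsmooth : ∃ e : ℤ, ∀ (g : Matrix (Fin (n + 1)) (Fin (n + 1)) F) (i : Fin n)
      (x : F), x ≠ 0 → e ≤ val x →
      W (g * (1 + x • Matrix.single i.castSucc i.succ (1 : F))) = W g) :
    ∃ r : ℤ, ∀ a : Fin n → Fˣ,
      W (Matrix.diagonal fun j : Fin (n + 1) =>
          if h : (j : ℕ) < n then ((a ⟨j, h⟩ : Fˣ) : F) else 1) ≠ 0 →
      ∀ (i : Fin n) (h : (i : ℕ) + 1 < n),
        r ≤ val (a i : F) - val ((a ⟨(i : ℕ) + 1, h⟩ : Fˣ) : F) :=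
  whittaker_support_bounded_general A F n val hval ψ hψu W hW hWsmooth
end
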